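/- Let $p \geq 5$ be a prime and let $\mathscr{L}_p$ be the symmetric Latin square of order $2p$ on symbol set $\mathbb{Z}_p \times \{1,2\}$ defined by the explicit formula given in the context. Then the ten triples $((0,1),(0,1),(0,1))$, $((0,1),(0,2),(1,2))$, $((0,1),(-1,1),(0,2))$, $((0,1),(1,2),(-2,1))$, $((0,1),(1,1),(2,2))$, $((0,2),(0,1),(1,2))$, $((0,2),(0,2),(0,2))$, $((0,2),(-1,1),(-2,1))$, $((0,2),(1,2),(2,2))$, $((0,2),(1,1),(0,1))$ are all entries of $\mathscr{L}_p$, and they form a $2\times 5$ subrectangle of $\mathscr{L}_p$ in rows $(0,1)$ and $(0,2)$; hence $\mathscr{L}_p$ contains a proper subrectangle, so $\mathscr{L}_p$ is not row-Hamiltonian. -/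
import Mathlib


/-- A Latin square as a function (row, column) ↦ symbol: every row and every
column is a bijection. -/
def IsLatinFn {α : Type*} (L : α → α → α) : Prop :=
  (∀ r, Function.Bijective (L r)) ∧ ∀ c, Function.Bijective fun r => L r c

/-- The rows `R` and columns `C` form a subrectangle of `L`: the submatrix uses
exactly `|C|` symbols (i.e. is a Latin rectangle). -/
def IsSubrect {α : Type*} [DecidableEq α] (L : α → α → α) (R C : Finset α) : Prop :=
  ((R ×ˢ C).image fun p => L p.1 p.2).card = C.card

/-- `L` is row-Hamiltonian: it has no proper subrectangle, i.e. no subrectangle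
with `1 < |R| ≤ |C| < n`. -/
def RowHamFn {α : Type*} [Fintype α] [DecidableEq α] (L : α → α → α) : Prop :=
  ¬ ∃ R C : Finset α, 1 < R.card ∧ R.card ≤ C.card ∧ C.card < Fintype.card α ∧ IsSubrect L R C

/-- A row cycle: a `2 × |C|` subrectangle containing no proper (nonempty, smaller)
subrectangle on the same pair of rows. -/
def IsRowCycle {α : Type*} [DecidableEq α] (L : α → α → α) (R C : Finset α) : Prop :=
  R.card = 2 ∧ C.Nonempty ∧ IsSubrect L R C ∧
    ∀ C' ⊆ C, C'.Nonempty → IsSubrect L R C' → C' = C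

/-- The Latin square `ℒ_p` of order `2p` on `ℤ_p × {1,2}` (here `Fin 2` plays the role
of `{1,2}`, with `0 ↔ 1` and `1 ↔ 2`), obtained from the perfect 1-factorisation
`GA_{2p}` with root vertex `(-1,2)`. -/
def Lp (p : ℕ) (r c : ZMod p × Fin 2) : ZMod p × Fin 2 :=
  if r = c then r
  else if r.2 = c.2 then
    (if r.1 + c.1 + 2 = 0 then (-1, 0) else (r.1 + c.1 + 1, 1))
  else if r.1 = c.1 then (2 * r.1 + 1, 1)
  else if r.2 = 0 then (r.1 - c.1 - 1, 0)
  else (c.1 - r.1 - 1, 0)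

/-- For a prime `p ≥ 5`, the ten listed triples are entries of `ℒ_p`, they form a
`2 × 5` subrectangle in rows `(0,1)` and `(0,2)`, and hence `ℒ_p` contains a proper
subrectangle and is not row-Hamiltonian. -/
theorem stmt12 (p : ℕ) [NeZero p] (hp : p.Prime) (h5 : 5 ≤ p) :
    (Lp p (0, 0) (0, 0) = (0, 0) ∧
     Lp p (0, 0) (0, 1) = (1, 1) ∧
     Lp p (0, 0) (-1, 0) = (0, 1) ∧
     Lp p (0, 0) (1, 1) = (-2, 0) ∧
     Lp p (0, 0) (1, 0) = (2, 1) ∧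
     Lp p (0, 1) (0, 0) = (1, 1) ∧
     Lp p (0, 1) (0, 1) = (0, 1) ∧
     Lp p (0, 1) (-1, 0) = (-2, 0) ∧
     Lp p (0, 1) (1, 1) = (2, 1) ∧
     Lp p (0, 1) (1, 0) = (0, 0)) ∧
    ({(0, 0), (0, 1)} : Finset (ZMod p × Fin 2)).card = 2 ∧
    ({(0, 0), (0, 1), (-1, 0), (1, 1), (1, 0)} : Finset (ZMod p × Fin 2)).card = 5 ∧
    IsSubrect (Lp p) ({(0, 0), (0, 1)} : Finset (ZMod p × Fin 2))
      ({(0, 0), (0, 1), (-1, 0), (1, 1), (1, 0)} : Finset (ZMod p × Fin 2)) ∧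
    ¬ RowHamFn (Lp p) := by
  have hcast : ∀ n : ℕ, 0 < n → n < p → (n : ZMod p) ≠ 0 := by
    intro n h0 hlt h
    rw [ZMod.natCast_eq_zero_iff] at h
    exact absurd (Nat.le_of_dvd h0 h) (by omega)
  have h1 : (1 : ZMod p) ≠ 0 := by simpa using hcast 1 one_pos (by omega)
  have h2 : (2 : ZMod p) ≠ 0 := by simpa using hcast 2 (by norm_num) (by omega)
  have h3 : (3 : ZMod p) ≠ 0 := by simpa using hcast 3 (by norm_num) (by omega)
  have h4 : (4 : ZMod p) ≠ 0 := by simpa using hcast 4 (by norm_num) (by omega)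
  have n01 : ¬ (0 : ZMod p) = 1 := fun h => h1 h.symm
  have n0m1 : ¬ (0 : ZMod p) = -1 := fun h => h1 (by linear_combination h)
  have nm11 : ¬ (-1 : ZMod p) = 1 := fun h => h2 (by linear_combination -h)
  have n0m2 : ¬ (0 : ZMod p) = -2 := fun h => h2 (by linear_combination h)
  have n10 : ¬ (1 : ZMod p) = 0 := h1
  have n12 : ¬ (1 : ZMod p) = 2 := fun h => h1 (by linear_combination -h)
  have n02 : ¬ (0 : ZMod p) = 2 := fun h => h2 (by linear_combination -h)
  have a1 : ¬ (0 : ZMod p) + -1 + 2 = 0 := fun h => h1 (by linear_combination h)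
  have a2 : ¬ (0 : ZMod p) + 1 + 2 = 0 := fun h => h3 (by linear_combination h)
  have b1 : ¬ (-1 : ZMod p) + 2 = 0 := fun h => h1 (by linear_combination h)
  have b2 : ¬ (1 : ZMod p) + 2 = 0 := fun h => h3 (by linear_combination h)
  have b3 : (-1 : ZMod p) - 1 = -2 := by ring
  have b4 : (1 : ZMod p) + 1 = 2 := by ring
  have r1 : (2 : ZMod p) * 0 + 1 = 1 := by ring
  have r2 : (0 : ZMod p) + -1 + 1 = 0 := by ring
  have r3 : (0 : ZMod p) - 1 - 1 = -2 := by ring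
  have r4 : (0 : ZMod p) + 1 + 1 = 2 := by ring
  have r5 : (-1 : ZMod p) - 0 - 1 = -2 := by ring
  have r6 : (1 : ZMod p) - 0 - 1 = 0 := by ring
  have e1 : Lp p (0, 0) (0, 0) = (0, 0) := by simp [Lp]
  have e2 : Lp p (0, 0) (0, 1) = (1, 1) := by simp [Lp, Prod.ext_iff, n01, n0m1, b1, b2, b3, b4]
  have e3 : Lp p (0, 0) (-1, 0) = (0, 1) := by simp [Lp, Prod.ext_iff, n01, n0m1, b1, b2, b3, b4]
  have e4 : Lp p (0, 0) (1, 1) = (-2, 0) := by simp [Lp, Prod.ext_iff, n01, n0m1, b1, b2, b3, b4]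
  have e5 : Lp p (0, 0) (1, 0) = (2, 1) := by simp [Lp, Prod.ext_iff, n01, n0m1, b1, b2, b3, b4]
  have e6 : Lp p (0, 1) (0, 0) = (1, 1) := by simp [Lp, Prod.ext_iff, n01, n0m1, b1, b2, b3, b4]
  have e7 : Lp p (0, 1) (0, 1) = (0, 1) := by simp [Lp]
  have e8 : Lp p (0, 1) (-1, 0) = (-2, 0) := by simp [Lp, Prod.ext_iff, n01, n0m1, b1, b2, b3, b4]
  have e9 : Lp p (0, 1) (1, 1) = (2, 1) := by simp [Lp, Prod.ext_iff, n01, n0m1, b1, b2, b3, b4]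
  have e10 : Lp p (0, 1) (1, 0) = (0, 0) := by simp [Lp, Prod.ext_iff, n01, n0m1, b1, b2, b3, b4]
  set R : Finset (ZMod p × Fin 2) := {(0, 0), (0, 1)} with hR
  set C : Finset (ZMod p × Fin 2) := {(0, 0), (0, 1), (-1, 0), (1, 1), (1, 0)} with hC
  set S : Finset (ZMod p × Fin 2) := {(0, 0), (1, 1), (0, 1), (-2, 0), (2, 1)} with hS
  have hRcard : R.card = 2 := by
    rw [hR, Finset.card_insert_of_notMem (by simp [Prod.ext_iff]), Finset.card_singleton]
  have hCcard : C.card = 5 := by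
    rw [hC]
    rw [Finset.card_insert_of_notMem (by simp [Prod.ext_iff, n0m1, n01]),
        Finset.card_insert_of_notMem (by simp [Prod.ext_iff, n01]),
        Finset.card_insert_of_notMem (by simp [Prod.ext_iff, nm11]),
        Finset.card_insert_of_notMem (by simp [Prod.ext_iff]),
        Finset.card_singleton]
  have hScard : S.card = 5 := by
    rw [hS]
    rw [Finset.card_insert_of_notMem (by simp [Prod.ext_iff, n0m2]),
        Finset.card_insert_of_notMem (by simp [Prod.ext_iff, n10, n12]),
        Finset.card_insert_of_notMem (by simp [Prod.ext_iff, n02]),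
        Finset.card_insert_of_notMem (by simp [Prod.ext_iff]),
        Finset.card_singleton]
  have himg : ((R ×ˢ C).image fun q => Lp p q.1 q.2) = S := by
    ext x
    simp only [hR, hC, hS, Finset.mem_image, Finset.mem_product, Finset.mem_insert,
      Finset.mem_singleton]
    constructor
    · rintro ⟨⟨r, c⟩, ⟨hr, hc⟩, rfl⟩
      rcases hr with rfl | rfl <;> rcases hc with rfl | rfl | rfl | rfl | rfl
      · exact Or.inl e1
      · exact Or.inr (Or.inl e2)
      · exact Or.inr (Or.inr (Or.inl e3))
      · exact Or.inr (Or.inr (Or.inr (Or.inl e4)))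
      · exact Or.inr (Or.inr (Or.inr (Or.inr e5)))
      · exact Or.inr (Or.inl e6)
      · exact Or.inr (Or.inr (Or.inl e7))
      · exact Or.inr (Or.inr (Or.inr (Or.inl e8)))
      · exact Or.inr (Or.inr (Or.inr (Or.inr e9)))
      · exact Or.inl e10
    · rintro (rfl | rfl | rfl | rfl | rfl)
      · exact ⟨((0, 0), (0, 0)), ⟨by simp, by simp⟩, e1⟩
      · exact ⟨((0, 0), (0, 1)), ⟨by simp, by simp⟩, e2⟩
      · exact ⟨((0, 0), (-1, 0)), ⟨by simp, by simp⟩, e3⟩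
      · exact ⟨((0, 0), (1, 1)), ⟨by simp, by simp⟩, e4⟩
      · exact ⟨((0, 0), (1, 0)), ⟨by simp, by simp⟩, e5⟩
  have hsub : IsSubrect (Lp p) R C := by
    unfold IsSubrect
    rw [himg, hCcard, hScard]
  have hcardα : Fintype.card (ZMod p × Fin 2) = p * 2 := by simp [ZMod.card]
  refine ⟨⟨e1, e2, e3, e4, e5, e6, e7, e8, e9, e10⟩, hRcard, hCcard, hsub, ?_⟩
  intro hRH
  exact hRH ⟨R, C, by omega, by omega, by omega, hsub⟩
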